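/- arXiv:1803.06697 — 3 statements merged into one kernel-verified Lean document; each statement's English description precedes it below -/
import Mathlib

section
/- For all integers e ≥ 1, N ≥ 1, k ≥ 1 and all α ∈ (0,1) there exists a constant C = C(e,N,k,α) such that for every ℤ^e-periodic map σ : ℝ^e → ℝ^N of class C^k whose k-th derivative is α-Hölder continuous, one has sup_{ℝ^e} ‖Dσ‖ ≤ C · [D^k σ]_{C^α(ℝ^e)}. (This is the statement, for the flat torus T^e = ℝ^e/ℤ^e and the trivial bundle, that on a compact manifold without boundary the sup-norm of the first derivative of a section is controlled by the Hölder seminorm of its k-th derivative alone; the analogous estimate fails on manifolds with boundary.) -/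
/-! If `g` is differentiable and `c`-periodic, then `g' x c = -(g (x + c) - g x - g' x c)`, and the
mean value inequality bounds this by `‖c‖` times the oscillation of `g'` on `[x, x + c]`. Testing
on the basis vectors, which are periods, gives `sup ‖Dg‖ ≤ e · osc (Dg)` over unit segments along
the axes. Apply this to `g = D^{n-1} σ`: for `n = k` the oscillation is at most `M` by Hölder
continuity, and for `n < k` it is at most `sup ‖D^{n+1} σ‖` by the mean value inequality again.
Descending from `n = k` to `n = 1` gives `sup ‖Dσ‖ ≤ e^k M`. -/

noncomputable section

def eunorm {ι : Type*} [Fintype ι] {E : Type*} [Norm E] (x : ι → E) : ℝ :=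
  Real.sqrt (∑ i, ‖x i‖ ^ 2)

open Set Function

lemma eunorm_single {ι F : Type*} [SeminormedAddCommGroup F] [Fintype ι] [DecidableEq ι]
    (i : ι) (a : F) : eunorm (Pi.single i a) = ‖a‖ := by
  rw [eunorm, Finset.sum_eq_single i (fun j _ hj => by simp [hj]) (by simp), Pi.single_eq_same,
    Real.sqrt_sq (norm_nonneg a)]

lemma norm_sub_le_of_eunorm_holder {ι F : Type*} [SeminormedAddCommGroup F] [Fintype ι]
    [DecidableEq ι] {f : (ι → ℝ) → F} {M α : ℝ} (hα : 0 ≤ α)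
    (hf : ∀ x x', ‖f x - f x'‖ ≤ M * eunorm (x - x') ^ α) (x : ι → ℝ) (i : ι)
    {t : ℝ} (ht : t ∈ Icc (0 : ℝ) 1) : ‖f (x + t • Pi.single i 1) - f x‖ ≤ M := by
  have hdist : ∀ s : ℝ, eunorm (x + s • Pi.single i 1 - x) = |s| := fun s => by
    rw [add_sub_cancel_left, ← Pi.single_smul', smul_eq_mul, mul_one, eunorm_single,
      Real.norm_eq_abs]
  have hM : 0 ≤ M := by
    have h1 := hf (x + (1 : ℝ) • Pi.single i 1) x
    rw [hdist, abs_one, Real.one_rpow, mul_one] at h1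
    exact (norm_nonneg _).trans h1
  refine (hf _ _).trans ?_
  rw [hdist, abs_of_nonneg ht.1]
  exact mul_le_of_le_one_right hM (Real.rpow_le_one ht.1 ht.2 hα)

section

variable {E F : Type*} [NormedAddCommGroup E] [NormedSpace ℝ E]
  [NormedAddCommGroup F] [NormedSpace ℝ F]

lemma Function.Periodic.iteratedFDeriv {σ : E → F} {c : E} (h : Periodic σ c) (n : ℕ) :
    Periodic (iteratedFDeriv ℝ n σ) c := fun x => by
  rw [← iteratedFDeriv_comp_add_right, show (fun z => σ (z + c)) = σ from funext h]

lemma ContinuousLinearMap.opNorm_le_sum_norm_apply_single {ι : Type*} [Fintype ι]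
    [DecidableEq ι] (L : (ι → ℝ) →L[ℝ] F) : ‖L‖ ≤ ∑ i, ‖L (Pi.single i 1)‖ := by
  refine L.opNorm_le_bound (by positivity) fun v => ?_
  calc ‖L v‖ = ‖∑ i, v i • L (Pi.single i 1)‖ := by
        conv_lhs => rw [← Finset.univ_sum_single v, map_sum]
        congr 1
        refine Finset.sum_congr rfl fun i _ => ?_
        rw [← map_smul, ← Pi.single_smul', smul_eq_mul, mul_one]
    _ ≤ ∑ i, ‖v‖ * ‖L (Pi.single i 1)‖ := by
        refine (norm_sum_le _ _).trans (Finset.sum_le_sum fun i _ => ?_)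
        rw [norm_smul]
        gcongr
        exact norm_le_pi_norm v i
    _ = (∑ i, ‖L (Pi.single i 1)‖) * ‖v‖ := by rw [← Finset.mul_sum, mul_comm]

lemma norm_fderiv_apply_le_of_periodic {g : E → F} {c : E} (hg : Differentiable ℝ g)
    (hper : Periodic g c) {D : ℝ} {x : E}
    (hosc : ∀ t ∈ Icc (0 : ℝ) 1, ‖fderiv ℝ g (x + t • c) - fderiv ℝ g x‖ ≤ D) :
    ‖fderiv ℝ g x c‖ ≤ D * ‖c‖ := by
  set L := fderiv ℝ g x
  have hderiv : ∀ t : ℝ, HasDerivAt (fun s : ℝ => g (x + s • c) - s • L c)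
      (fderiv ℝ g (x + t • c) c - L c) t := fun t => by
    have hline : HasDerivAt (fun s : ℝ => x + s • c) c t := by
      simpa using ((hasDerivAt_id t).smul_const c).const_add x
    have hlin : HasDerivAt (fun s : ℝ => s • L c) (L c) t := by
      simpa using (hasDerivAt_id t).smul_const (L c)
    exact ((hg _).hasFDerivAt.comp_hasDerivAt t hline).sub hlin
  have hmvt := norm_image_sub_le_of_norm_deriv_le_segment_01'
    (fun t _ => (hderiv t).hasDerivWithinAt) fun t ht => by
      rw [← sub_apply]
      exact ((fderiv ℝ g (x + t • c) - L).le_opNorm c).trans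
        (mul_le_mul_of_nonneg_right (hosc t (Ico_subset_Icc_self ht)) (norm_nonneg c))
  simpa [hper x] using hmvt

lemma norm_iteratedFDeriv_sub_le {σ : E → F} {n : ℕ}
    (hσ : Differentiable ℝ (iteratedFDeriv ℝ n σ)) {B : ℝ}
    (hB : ∀ x, ‖iteratedFDeriv ℝ (n + 1) σ x‖ ≤ B) (x y : E) :
    ‖iteratedFDeriv ℝ n σ y - iteratedFDeriv ℝ n σ x‖ ≤ B * ‖y - x‖ :=
  convex_univ.norm_image_sub_le_of_norm_fderiv_le (fun z _ => hσ z)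
    (fun z _ => norm_fderiv_iteratedFDeriv.trans_le (hB z)) trivial trivial

lemma norm_fderiv_iteratedFDeriv_sub {σ : E → F} {n : ℕ} (x y : E) :
    ‖fderiv ℝ (iteratedFDeriv ℝ n σ) y - fderiv ℝ (iteratedFDeriv ℝ n σ) x‖ =
      ‖iteratedFDeriv ℝ (n + 1) σ y - iteratedFDeriv ℝ (n + 1) σ x‖ := by
  simp only [fderiv_iteratedFDeriv, comp_apply]
  rw [← LinearIsometryEquiv.map_sub, LinearIsometryEquiv.norm_map]

end

section Lattice

variable {e : ℕ} {F : Type*} [NormedAddCommGroup F] [NormedSpace ℝ F]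

lemma norm_iteratedFDeriv_succ_le_of_periodic {σ : (Fin e → ℝ) → F} {n : ℕ}
    (hσ : Differentiable ℝ (iteratedFDeriv ℝ n σ)) (hper : ∀ i, Periodic σ (Pi.single i 1))
    {D : ℝ} (hosc : ∀ x i, ∀ t ∈ Icc (0 : ℝ) 1,
      ‖iteratedFDeriv ℝ (n + 1) σ (x + t • Pi.single i 1) - iteratedFDeriv ℝ (n + 1) σ x‖ ≤ D)
    (x : Fin e → ℝ) : ‖iteratedFDeriv ℝ (n + 1) σ x‖ ≤ e * D := by
  rw [← norm_fderiv_iteratedFDeriv]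
  calc _ ≤ ∑ i, ‖fderiv ℝ (iteratedFDeriv ℝ n σ) x (Pi.single i 1)‖ :=
        ContinuousLinearMap.opNorm_le_sum_norm_apply_single _
    _ ≤ ∑ _i : Fin e, D := Finset.sum_le_sum fun i _ => by
        simpa [Pi.norm_single] using
          norm_fderiv_apply_le_of_periodic hσ ((hper i).iteratedFDeriv n) fun t ht =>
            (norm_fderiv_iteratedFDeriv_sub _ _).trans_le (hosc x i t ht)
    _ = e * D := by simp

lemma norm_iteratedFDeriv_le_of_periodic {σ : (Fin e → ℝ) → F} {k : ℕ}
    (hσ : ContDiff ℝ k σ) (hper : ∀ i, Periodic σ (Pi.single i 1)) {D : ℝ}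
    (hosc : ∀ x i, ∀ t ∈ Icc (0 : ℝ) 1,
      ‖iteratedFDeriv ℝ k σ (x + t • Pi.single i 1) - iteratedFDeriv ℝ k σ x‖ ≤ D)
    (d m : ℕ) (hmk : m + 1 + d = k) (x : Fin e → ℝ) :
    ‖iteratedFDeriv ℝ (m + 1) σ x‖ ≤ e ^ (d + 1) * D := by
  have hdiff : ∀ j, j < k → Differentiable ℝ (iteratedFDeriv ℝ j σ) := fun j hj =>
    hσ.differentiable_iteratedFDeriv (by exact_mod_cast hj)
  induction d generalizing m x with
  | zero =>
    obtain rfl : k = m + 1 := by omega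
    simpa using norm_iteratedFDeriv_succ_le_of_periodic (hdiff m (by omega)) hper hosc x
  | succ d ih =>
    have hB := ih (m + 1) (by omega)
    have hB0 : 0 ≤ (e : ℝ) ^ (d + 1) * D := (norm_nonneg _).trans (hB x)
    have hosc' : ∀ y i, ∀ t ∈ Icc (0 : ℝ) 1, ‖iteratedFDeriv ℝ (m + 1) σ (y + t • Pi.single i 1)
        - iteratedFDeriv ℝ (m + 1) σ y‖ ≤ e ^ (d + 1) * D := fun y i t ht => by
      refine (norm_iteratedFDeriv_sub_le (hdiff (m + 1) (by omega)) hB _ _).trans ?_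
      rw [add_sub_cancel_left, norm_smul, Pi.norm_single, norm_one, mul_one,
        Real.norm_of_nonneg ht.1]
      exact mul_le_of_le_one_right hB0 ht.2
    calc _ ≤ e * (e ^ (d + 1) * D) :=
          norm_iteratedFDeriv_succ_le_of_periodic (hdiff m (by omega)) hper hosc' x
      _ = e ^ (d + 1 + 1) * D := by ring

end Lattice

theorem first_derivative_bound_torus_general
    (e N k : ℕ) (he : 1 ≤ e) (hk : 1 ≤ k)
    (α : ℝ) (hα0 : 0 < α) :
    ∃ C : ℝ, 0 < C ∧
      ∀ σ : (Fin e → ℝ) → (Fin N → ℝ),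
        ContDiff ℝ (k : ℕ) σ →
        (∀ v : Fin e → ℤ, ∀ x, σ (x + fun i => (v i : ℝ)) = σ x) →
        ∀ M : ℝ,
        (∀ x x', ‖iteratedFDeriv ℝ k σ x - iteratedFDeriv ℝ k σ x'‖
          ≤ M * eunorm (x - x') ^ α) →
        ∀ x, ‖fderiv ℝ σ x‖ ≤ C * M := by
  refine ⟨(e : ℝ) ^ k, by positivity, fun σ hσ hper M hM x => ?_⟩
  have hper_single : ∀ i, Periodic σ (Pi.single i 1) := fun i y => by
    have hcast : (fun j => ((Pi.single i 1 : Fin e → ℤ) j : ℝ)) = Pi.single i 1 := by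
      ext j
      rw [Pi.apply_single (fun _ (n : ℤ) => (n : ℝ)) (fun _ => Int.cast_zero), Int.cast_one]
    exact hcast ▸ hper (Pi.single i 1) y
  have hbound := norm_iteratedFDeriv_le_of_periodic hσ hper_single
    (fun y i t ht => norm_sub_le_of_eunorm_holder hα0.le hM y i ht) (k - 1) 0 (by omega) x
  rwa [← norm_iteratedFDeriv_fderiv (n := 0), norm_iteratedFDeriv_zero, Nat.sub_add_cancel hk]
    at hbound

/-- **Sup-norm of the first derivative controlled by the Hölder seminorm of the `k`-th
derivative on the flat torus `T^e = ℝ^e/ℤ^e`** (the flat-torus case of Lemma 3.3 of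
Hein–Tosatti): for every `ℤ^e`-periodic `σ : ℝ^e → ℝ^N` of class `C^{k,α}`,
`sup ‖Dσ‖ ≤ C [D^k σ]_{C^α}`. -/
theorem first_derivative_bound_torus
    (e N k : ℕ) (he : 1 ≤ e) (hN : 1 ≤ N) (hk : 1 ≤ k)
    (α : ℝ) (hα0 : 0 < α) (hα1 : α < 1) :
    ∃ C : ℝ, 0 < C ∧
      ∀ σ : (Fin e → ℝ) → (Fin N → ℝ),
        ContDiff ℝ (k : ℕ) σ →
        (∀ v : Fin e → ℤ, ∀ x, σ (x + fun i => (v i : ℝ)) = σ x) →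
        ∀ M : ℝ,
        (∀ x x', ‖iteratedFDeriv ℝ k σ x - iteratedFDeriv ℝ k σ x'‖
          ≤ M * eunorm (x - x') ^ α) →
        ∀ x, ‖fderiv ℝ σ x‖ ≤ C * M :=
  first_derivative_bound_torus_general e N k he hk α hα0
end
end

section
/- For all ε ∈ [0,1), all integers k ≥ 1 and m ≥ 1, and all real exponents β_1 < β_2 < … < β_k and γ_1 < γ_2 < … < γ_m, there exists a constant C (depending only on ε and the exponents) such that the following holds. Let T > 0, let f_1, …, f_k : [0,T] → ℝ be bounded nonnegative functions, and let A_1, …, A_m ≥ 0 be constants such that Σ_{j=1}^k (R−ρ)^{β_j} f_j(ρ) ≤ ε Σ_{j=1}^k (R−ρ)^{β_j} f_j(R) + Σ_{ℓ=1}^m A_ℓ (R−ρ)^{γ_ℓ} for all 0 ≤ ρ < R ≤ T. Then Σ_{j=1}^k (R−ρ)^{β_j} f_j(ρ) ≤ C Σ_{ℓ=1}^m A_ℓ (R−ρ)^{γ_ℓ} for all 0 ≤ ρ < R ≤ T. -/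
/-!
Fix `θ ∈ (0,1)` and walk from `ρ` towards `R` along `ρᵢ = R - θⁱ (R - ρ)`, whose consecutive
gaps `dᵢ = θⁱ (1 - θ)(R - ρ)` shrink geometrically. Applying the hypothesis on `[ρᵢ, ρᵢ₊₁]`
and using `dᵢ^{β_j} ≤ θ^{-b} dᵢ₊₁^{β_j}` gives, for `gᵢ = Σ_j dᵢ^{β_j} f_j(ρᵢ)`, the recursion
`gᵢ ≤ ε θ^{-b} gᵢ₊₁ + θ^{a i} Σ_ℓ A_ℓ d₀^{γ_ℓ}`, where `b` bounds the `β_j` from above and `a`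
bounds all exponents from below. Once `θ` is so close to `1` that `ε θ^{a-b} < 1`, iterating
kills the remainder (the `f_j` are bounded) and sums the inhomogeneous terms as a geometric
series.
-/

open Finset Filter Topology Real

noncomputable def powerSum {ι : Type*} [Fintype ι] (p w : ι → ℝ) (t : ℝ) : ℝ :=
  ∑ i, t ^ p i * w i

section powerSum

variable {ι : Type*} [Fintype ι] {p w w' : ι → ℝ} {s t a b : ℝ}

lemma powerSum_nonneg (hw : ∀ i, 0 ≤ w i) (ht : 0 ≤ t) : 0 ≤ powerSum p w t :=
  sum_nonneg fun i _ => mul_nonneg (rpow_nonneg ht _) (hw i)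

lemma powerSum_mono (hw : ∀ i, w i ≤ w' i) (ht : 0 ≤ t) : powerSum p w t ≤ powerSum p w' t :=
  sum_le_sum fun i _ => mul_le_mul_of_nonneg_left (hw i) (rpow_nonneg ht _)

lemma powerSum_mul_le (hs0 : 0 < s) (hs1 : s ≤ 1) (ht : 0 ≤ t) (hw : ∀ i, 0 ≤ w i)
    (ha : ∀ i, a ≤ p i) : powerSum p w (s * t) ≤ s ^ a * powerSum p w t := by
  rw [powerSum, powerSum, mul_sum]
  refine sum_le_sum fun i _ => ?_
  rw [mul_rpow hs0.le ht, mul_assoc]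
  exact mul_le_mul_of_nonneg_right (rpow_le_rpow_of_exponent_ge hs0 hs1 (ha i))
    (mul_nonneg (rpow_nonneg ht _) (hw i))

lemma rpow_mul_powerSum_le (hs0 : 0 < s) (hs1 : s ≤ 1) (ht : 0 ≤ t) (hw : ∀ i, 0 ≤ w i)
    (hb : ∀ i, p i ≤ b) : s ^ b * powerSum p w t ≤ powerSum p w (s * t) := by
  rw [powerSum, powerSum, mul_sum]
  refine sum_le_sum fun i _ => ?_
  rw [mul_rpow hs0.le ht, mul_assoc]
  exact mul_le_mul_of_nonneg_right (rpow_le_rpow_of_exponent_ge hs0 hs1 (hb i))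
    (mul_nonneg (rpow_nonneg ht _) (hw i))

end powerSum

lemma le_div_one_sub_of_le_mul_succ_add_pow {g : ℕ → ℝ} {r s H G : ℝ} (hr : 0 ≤ r) (hs : 0 ≤ s)
    (hH : 0 ≤ H) (hrs : r * s < 1) (hstep : ∀ i, g i ≤ r * g (i + 1) + s ^ i * H)
    (htail : ∀ N, g N ≤ s ^ N * G) : g 0 ≤ H / (1 - r * s) := by
  have hiter : ∀ N, g 0 ≤ r ^ N * g N + ∑ i ∈ range N, (r * s) ^ i * H := by
    intro N
    induction N with
    | zero => simp
    | succ N ih =>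
      have := mul_le_mul_of_nonneg_left (hstep N) (pow_nonneg hr N)
      rw [sum_range_succ, mul_pow]
      linarith [show r ^ N * (r * g (N + 1) + s ^ N * H)
        = r ^ (N + 1) * g (N + 1) + r ^ N * s ^ N * H by ring]
  have hbound : ∀ N, g 0 ≤ (r * s) ^ N * G + H / (1 - r * s) := by
    intro N
    have hgeom : ∑ i ∈ range N, (r * s) ^ i ≤ 1 / (1 - r * s) := by
      simpa using geom_sum_Ico_le_of_lt_one (m := 0) (n := N) (mul_nonneg hr hs) hrs
    calc g 0 ≤ r ^ N * g N + (∑ i ∈ range N, (r * s) ^ i) * H := by rw [sum_mul]; exact hiter N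
      _ ≤ r ^ N * (s ^ N * G) + 1 / (1 - r * s) * H := by
          gcongr
          exact htail N
      _ = (r * s) ^ N * G + H / (1 - r * s) := by ring
  have hlim : Tendsto (fun N => (r * s) ^ N * G + H / (1 - r * s)) atTop
      (𝓝 (H / (1 - r * s))) := by
    simpa using ((tendsto_pow_atTop_nhds_zero_of_lt_one (mul_nonneg hr hs) hrs).mul_const
      G).add_const (H / (1 - r * s))
  exact ge_of_tendsto' hlim hbound

lemma exists_mem_Ioo_mul_rpow_lt_one {ε : ℝ} (hε : ε < 1) (e : ℝ) :
    ∃ θ ∈ Set.Ioo (0 : ℝ) 1, ε * θ ^ e < 1 := by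
  have hlim : Tendsto (fun θ : ℝ => ε * θ ^ e) (𝓝[<] 1) (𝓝 ε) := by
    have := ((continuousAt_rpow_const 1 e (Or.inl one_ne_zero)).tendsto.const_mul ε).mono_left
      (nhdsWithin_le_nhds (s := Set.Iio 1))
    rwa [one_rpow, mul_one] at this
  exact (Filter.Eventually.and (Ioo_mem_nhdsLT zero_lt_one) (hlim.eventually_lt_const hε)).exists

section iteration

variable {ι κ : Type*} [Fintype ι] [Fintype κ] {β : ι → ℝ} {γ : κ → ℝ} {f : ι → ℝ → ℝ}
  {A : κ → ℝ} {ε θ T a b : ℝ}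

lemma powerSum_le_of_step (hε : 0 ≤ ε) (hθ0 : 0 < θ) (hθ1 : θ ≤ 1) (hb : ∀ j, β j ≤ b)
    (hf0 : ∀ j, ∀ s ∈ Set.Icc 0 T, 0 ≤ f j s)
    (hyp : ∀ ρ R : ℝ, 0 ≤ ρ → ρ < R → R ≤ T →
      powerSum β (f · ρ) (R - ρ) ≤ ε * powerSum β (f · R) (R - ρ) + powerSum γ A (R - ρ))
    {x d : ℝ} (hx : 0 ≤ x) (hd : 0 < d) (hxd : x + d ≤ T) :
    powerSum β (f · x) d ≤ ε * θ ^ (-b) * powerSum β (f · (x + d)) (θ * d) + powerSum γ A d := by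
  have h := hyp x (x + d) hx (by linarith) hxd
  rw [add_sub_cancel_left] at h
  have hscale := rpow_mul_powerSum_le hθ0 hθ1 hd.le (fun j => hf0 j _ ⟨by linarith, hxd⟩) hb
  have hθb : θ ^ (-b) * θ ^ b = 1 := by rw [← rpow_add hθ0, neg_add_cancel, rpow_zero]
  have : powerSum β (f · (x + d)) d ≤ θ ^ (-b) * powerSum β (f · (x + d)) (θ * d) := by
    calc _ = θ ^ (-b) * (θ ^ b * powerSum β (f · (x + d)) d) := by rw [← mul_assoc, hθb, one_mul]
      _ ≤ _ := mul_le_mul_of_nonneg_left hscale (rpow_nonneg hθ0.le _)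
  calc _ ≤ ε * powerSum β (f · (x + d)) d + powerSum γ A d := h
    _ ≤ _ := by rw [mul_assoc]; gcongr

lemma powerSum_le_div_of_iteration (hε : 0 ≤ ε) (hθ0 : 0 < θ) (hθ1 : θ < 1)
    (hμ : ε * θ ^ (a - b) < 1) (ha : ∀ j, a ≤ β j) (hb : ∀ j, β j ≤ b) (hγ : ∀ l, a ≤ γ l)
    (hfM : ∀ j, ∃ M : ℝ, ∀ s ∈ Set.Icc 0 T, f j s ≤ M) (hf0 : ∀ j, ∀ s ∈ Set.Icc 0 T, 0 ≤ f j s)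
    (hA : ∀ l, 0 ≤ A l)
    (hyp : ∀ ρ R : ℝ, 0 ≤ ρ → ρ < R → R ≤ T →
      powerSum β (f · ρ) (R - ρ) ≤ ε * powerSum β (f · R) (R - ρ) + powerSum γ A (R - ρ))
    {ρ R : ℝ} (hρ : 0 ≤ ρ) (hρR : ρ < R) (hRT : R ≤ T) :
    powerSum β (f · ρ) ((1 - θ) * (R - ρ))
      ≤ powerSum γ A ((1 - θ) * (R - ρ)) / (1 - ε * θ ^ (a - b)) := by
  choose M hM using hfM
  set c := (1 - θ) * (R - ρ)
  have hc : 0 < c := mul_pos (sub_pos.2 hθ1) (sub_pos.2 hρR)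
  set x : ℕ → ℝ := fun i => R - θ ^ i * (R - ρ)
  have hθi : ∀ i : ℕ, θ ^ i ≤ 1 := fun i => pow_le_one₀ hθ0.le hθ1.le
  have hx : ∀ i, x i ∈ Set.Icc 0 T := fun i => by
    have := mul_pos (pow_pos hθ0 i) (sub_pos.2 hρR)
    constructor <;> nlinarith [hθi i]
  have hx_succ : ∀ i, x i + θ ^ i * c = x (i + 1) := fun i => by simp only [x, c]; ring
  set g : ℕ → ℝ := fun i => powerSum β (f · (x i)) (θ ^ i * c)
  have hstep : ∀ i, g i ≤ ε * θ ^ (-b) * g (i + 1) + (θ ^ a) ^ i * powerSum γ A c := by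
    intro i
    have h := powerSum_le_of_step (x := x i) hε hθ0 hθ1.le hb hf0 hyp (hx i).1
      (mul_pos (pow_pos hθ0 i) hc) (hx_succ i ▸ (hx (i + 1)).2)
    rw [hx_succ, ← mul_assoc θ, ← pow_succ'] at h
    have hq := powerSum_mul_le (pow_pos hθ0 i) (hθi i) hc.le hA hγ
    rw [← rpow_pow_comm hθ0.le] at hq
    linarith
  have htail : ∀ N, g N ≤ (θ ^ a) ^ N * powerSum β M c := fun N => by
    have hM0 : ∀ j, 0 ≤ M j := fun j => (hf0 j _ (hx 0)).trans (hM j _ (hx 0))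
    calc g N ≤ powerSum β M (θ ^ N * c) :=
          powerSum_mono (fun j => hM j _ (hx N)) (by positivity)
      _ ≤ (θ ^ N) ^ a * powerSum β M c := powerSum_mul_le (pow_pos hθ0 N) (hθi N) hc.le hM0 ha
      _ = _ := by rw [rpow_pow_comm hθ0.le]
  have hμ' : ε * θ ^ (-b) * θ ^ a = ε * θ ^ (a - b) := by
    rw [mul_assoc, ← rpow_add hθ0, neg_add_eq_sub]
  simpa [g, x, hμ'] using le_div_one_sub_of_le_mul_succ_add_pow
    (mul_nonneg hε (rpow_nonneg hθ0.le _)) (rpow_nonneg hθ0.le _) (powerSum_nonneg hA hc.le)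
    (hμ' ▸ hμ) hstep htail

theorem powerSum_le_of_iteration (hε : 0 ≤ ε) (hθ0 : 0 < θ) (hθ1 : θ < 1)
    (hμ : ε * θ ^ (a - b) < 1) (ha : ∀ j, a ≤ β j) (hb : ∀ j, β j ≤ b) (hγ : ∀ l, a ≤ γ l)
    (hfM : ∀ j, ∃ M : ℝ, ∀ s ∈ Set.Icc 0 T, f j s ≤ M) (hf0 : ∀ j, ∀ s ∈ Set.Icc 0 T, 0 ≤ f j s)
    (hA : ∀ l, 0 ≤ A l)
    (hyp : ∀ ρ R : ℝ, 0 ≤ ρ → ρ < R → R ≤ T →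
      powerSum β (f · ρ) (R - ρ) ≤ ε * powerSum β (f · R) (R - ρ) + powerSum γ A (R - ρ))
    {ρ R : ℝ} (hρ : 0 ≤ ρ) (hρR : ρ < R) (hRT : R ≤ T) :
    powerSum β (f · ρ) (R - ρ)
      ≤ (1 - θ) ^ a / (1 - ε * θ ^ (a - b)) / (1 - θ) ^ b * powerSum γ A (R - ρ) := by
  have hθ' : 0 < 1 - θ := sub_pos.2 hθ1
  have hlhs := rpow_mul_powerSum_le hθ' (by linarith) (sub_pos.2 hρR).le
    (fun j => hf0 j ρ ⟨hρ, by linarith⟩) hb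
  have hrhs := powerSum_mul_le hθ' (by linarith) (sub_pos.2 hρR).le hA hγ
  have hiter := powerSum_le_div_of_iteration hε hθ0 hθ1 hμ ha hb hγ hfM hf0 hA hyp hρ hρR hRT
  have : 0 < 1 - ε * θ ^ (a - b) := sub_pos.2 hμ
  calc _ ≤ powerSum β (f · ρ) ((1 - θ) * (R - ρ)) / (1 - θ) ^ b :=
        (le_div_iff₀' (rpow_pos_of_pos hθ' b)).2 hlhs
    _ ≤ (1 - θ) ^ a * powerSum γ A (R - ρ) / (1 - ε * θ ^ (a - b)) / (1 - θ) ^ b := by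
        gcongr
        exact hiter.trans (by gcongr)
    _ = _ := by ring

end iteration

theorem iteration_lemma_general
    (ε : ℝ) (hε0 : 0 ≤ ε) (hε1 : ε < 1)
    (k m : ℕ)
    (β : Fin k → ℝ)
    (γ : Fin m → ℝ) :
    ∃ C : ℝ, 0 < C ∧
      ∀ T : ℝ, 0 < T →
      ∀ (f : Fin k → ℝ → ℝ) (A : Fin m → ℝ),
        (∀ j, ∃ M : ℝ, ∀ s ∈ Set.Icc (0 : ℝ) T, f j s ≤ M) →
        (∀ j, ∀ s ∈ Set.Icc (0 : ℝ) T, 0 ≤ f j s) →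
        (∀ ℓ, 0 ≤ A ℓ) →
        (∀ ρ R : ℝ, 0 ≤ ρ → ρ < R → R ≤ T →
          ∑ j, (R - ρ) ^ β j * f j ρ
            ≤ ε * ∑ j, (R - ρ) ^ β j * f j R + ∑ ℓ, A ℓ * (R - ρ) ^ γ ℓ) →
        ∀ ρ R : ℝ, 0 ≤ ρ → ρ < R → R ≤ T →
          ∑ j, (R - ρ) ^ β j * f j ρ ≤ C * ∑ ℓ, A ℓ * (R - ρ) ^ γ ℓ := by
  obtain ⟨b, hb⟩ := (Set.finite_range β).bddAbove
  obtain ⟨a, ha⟩ := ((Set.finite_range β).union (Set.finite_range γ)).bddBelow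
  obtain ⟨θ, ⟨hθ0, hθ1⟩, hμ⟩ := exists_mem_Ioo_mul_rpow_lt_one hε1 (a - b)
  have : 0 < 1 - θ := sub_pos.2 hθ1
  have : 0 < 1 - ε * θ ^ (a - b) := sub_pos.2 hμ
  refine ⟨(1 - θ) ^ a / (1 - ε * θ ^ (a - b)) / (1 - θ) ^ b, by positivity, ?_⟩
  intro T _ f A hfM hf0 hA hyp ρ R hρ hρR hRT
  simp_rw [mul_comm (A _)] at hyp ⊢
  exact powerSum_le_of_iteration hε0 hθ0 hθ1 hμ (fun j => ha (Or.inl ⟨j, rfl⟩))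
    (fun j => hb ⟨j, rfl⟩) (fun l => ha (Or.inr ⟨l, rfl⟩)) hfM hf0 hA hyp hρ hρR hRT

/-- **Iteration lemma** (Lemma 3.4 of Hein–Tosatti, extending Giaquinta–Martinazzi):
if bounded nonnegative functions `f_1, …, f_k` on `[0,T]` satisfy
`Σ_j (R-ρ)^{β_j} f_j(ρ) ≤ ε Σ_j (R-ρ)^{β_j} f_j(R) + Σ_ℓ A_ℓ (R-ρ)^{γ_ℓ}` for all
`0 ≤ ρ < R ≤ T`, with `0 ≤ ε < 1`, then
`Σ_j (R-ρ)^{β_j} f_j(ρ) ≤ C Σ_ℓ A_ℓ (R-ρ)^{γ_ℓ}` for all `0 ≤ ρ < R ≤ T`, where `C`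
depends only on `ε` and the exponents. -/
theorem iteration_lemma
    (ε : ℝ) (hε0 : 0 ≤ ε) (hε1 : ε < 1)
    (k m : ℕ) (hk : 1 ≤ k) (hm : 1 ≤ m)
    (β : Fin k → ℝ) (hβ : StrictMono β)
    (γ : Fin m → ℝ) (hγ : StrictMono γ) :
    ∃ C : ℝ, 0 < C ∧
      ∀ T : ℝ, 0 < T →
      ∀ (f : Fin k → ℝ → ℝ) (A : Fin m → ℝ),
        (∀ j, ∃ M : ℝ, ∀ s ∈ Set.Icc (0 : ℝ) T, f j s ≤ M) →
        (∀ j, ∀ s ∈ Set.Icc (0 : ℝ) T, 0 ≤ f j s) →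
        (∀ ℓ, 0 ≤ A ℓ) →
        (∀ ρ R : ℝ, 0 ≤ ρ → ρ < R → R ≤ T →
          ∑ j, (R - ρ) ^ β j * f j ρ
            ≤ ε * ∑ j, (R - ρ) ^ β j * f j R + ∑ ℓ, A ℓ * (R - ρ) ^ γ ℓ) →
        ∀ ρ R : ℝ, 0 ≤ ρ → ρ < R → R ≤ T →
          ∑ j, (R - ρ) ^ β j * f j ρ ≤ C * ∑ ℓ, A ℓ * (R - ρ) ^ γ ℓ :=
  iteration_lemma_general ε hε0 hε1 k m β γ
end

section
/- For all integers d ≥ 0, e ≥ 1, N ≥ 1, k ≥ 1 and all α ∈ (0,1) there exists a constant C_k = C_k(d,e,N,k,α), independent of the center and of the radii, such that the following holds. For every p ∈ ℝ^{d+e}, all radii 0 < ρ < R, and every ℤ^e-periodic map σ : B_q(p,2R) → ℝ^N of class C^{k,α}_loc, one has Σ_{j=1}^k (R−ρ)^j sup_{B_q(p,ρ)} ‖D^j σ‖ ≤ C_k ( (R−ρ)^{k+α} [D^k σ]_{C^α(B_q(p,R))} + sup_{B_q(p,R)} ‖σ‖ ). (Interpolation inequality on geodesic balls of arbitrary radius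 of the flat cylinder ℝ^d × T^e, with constant independent of the radius.) -/
noncomputable section

/-- Translation by the lattice vector `(0, v)` of `ℝ^d × ℝ^e`, `v ∈ ℤ^e`. -/
def latv (d e : ℕ) (v : Fin e → ℤ) : (Fin d ⊕ Fin e) → ℝ :=
  Sum.elim (fun _ => 0) (fun b => (v b : ℝ))

/-- The lift to `ℝ^{d+e}` of the geodesic ball of radius `r` centered at `p` of the
flat cylinder `ℝ^d × T^e`. -/
def Bq (d e : ℕ) (p : (Fin d ⊕ Fin e) → ℝ) (r : ℝ) : Set ((Fin d ⊕ Fin e) → ℝ) :=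
  {x | ∃ v : Fin e → ℤ, eunorm (x - p - latv d e v) < r}

/-!
The estimate is local: a sup-norm ball of radius `(R - ρ) / (d + e + 1)` about a point of
`B_q(p, ρ)` lies in the Euclidean ball of radius `R - ρ`, hence in `B_q(p, R)`.

On a ball `B(x, r)`, the mixed forward difference `Δ_{h v₁} ⋯ Δ_{h v_j} f (x)` is at most
`2 ^ j sup ‖f‖` and, by the mean value inequality and induction on `j`, differs from
`h ^ j D^j f (x) (v₁, …, v_j)` by at most `j h ^ j osc D^j f`. Testing on basis vectors with
`h = r / (j + 1)` bounds `r ^ j ‖D^j f (x)‖` by `sup ‖f‖` and `r ^ j osc D^j f`. For `j = k` the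
oscillation is controlled by the Hölder seminorm; for `j < k` the mean value inequality on
`B(x, r/2)` controls it by the bound of order `j + 1`, applied on the balls `B(z, r/2)` with
`z ∈ B(x, r/2)`. Downward induction on `j` gives the interpolation inequality.
-/

open Set Metric

universe u

theorem norm_iteratedFDeriv_fderiv_sub {𝕜 E F : Type*} [NontriviallyNormedField 𝕜]
    [NormedAddCommGroup E] [NormedSpace 𝕜 E] [NormedAddCommGroup F] [NormedSpace 𝕜 F]
    (f : E → F) (n : ℕ) (z z' : E) :
    ‖iteratedFDeriv 𝕜 n (fderiv 𝕜 f) z - iteratedFDeriv 𝕜 n (fderiv 𝕜 f) z'‖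
      = ‖iteratedFDeriv 𝕜 (n + 1) f z - iteratedFDeriv 𝕜 (n + 1) f z'‖ := by
  simp only [iteratedFDeriv_succ_eq_comp_right, Function.comp_apply,
    ← LinearIsometryEquiv.map_sub, LinearIsometryEquiv.norm_map]

section MixedFwdDiff

variable {E F : Type*} [NormedAddCommGroup E] [NormedSpace ℝ E] [NormedAddCommGroup F]

def mixedFwdDiff {M G : Type*} [AddCommMonoid M] [AddCommGroup G] :
    {m : ℕ} → (Fin m → M) → (M → G) → M → G
  | 0, _, f => f
  | m + 1, v, f => fwdDiff (v (Fin.last m)) (mixedFwdDiff (Fin.init v) f)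

theorem zero_mem_parallelepiped {ι : Type*} [Fintype ι] (v : ι → E) : 0 ∈ parallelepiped v :=
  (mem_parallelepiped_iff v 0).2 ⟨0, left_mem_Icc.2 zero_le_one, by simp⟩

theorem add_smul_mem_parallelepiped_of_mem_init {m : ℕ} (v : Fin (m + 1) → E) {z : E}
    (hz : z ∈ parallelepiped (Fin.init v)) {s : ℝ} (hs : s ∈ Icc (0 : ℝ) 1) :
    z + s • v (Fin.last m) ∈ parallelepiped v := by
  rw [mem_parallelepiped_iff] at hz ⊢
  obtain ⟨t, ht, rfl⟩ := hz
  refine ⟨Fin.snoc t s, ⟨fun i => ?_, fun i => ?_⟩, ?_⟩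
  · exact Fin.lastCases (by simpa using hs.1) (fun i => by simpa using ht.1 i) i
  · exact Fin.lastCases (by simpa using hs.2) (fun i => by simpa using ht.2 i) i
  · simp [Fin.sum_univ_castSucc, Fin.init]

theorem norm_le_of_mem_parallelepiped {ι : Type*} [Fintype ι] {v : ι → E} {z : E}
    (hz : z ∈ parallelepiped v) : ‖z‖ ≤ ∑ i, ‖v i‖ := by
  obtain ⟨t, ht, rfl⟩ := (mem_parallelepiped_iff v z).1 hz
  refine (norm_sum_le _ _).trans (Finset.sum_le_sum fun i _ => ?_)
  rw [norm_smul, Real.norm_of_nonneg (ht.1 i)]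
  exact mul_le_of_le_one_left (norm_nonneg _) (ht.2 i)

theorem norm_mixedFwdDiff_le {m : ℕ} (v : Fin m → E) (f : E → F) (y : E) {M : ℝ}
    (hM : ∀ z ∈ parallelepiped v, ‖f (y + z)‖ ≤ M) :
    ‖mixedFwdDiff v f y‖ ≤ 2 ^ m * M := by
  induction m generalizing y with
  | zero => simpa [mixedFwdDiff] using hM 0 (zero_mem_parallelepiped v)
  | succ m ih =>
    have h₁ := ih (Fin.init v) (y + v (Fin.last m)) fun z hz => by
      simpa [add_assoc, add_comm z] using hM _ (add_smul_mem_parallelepiped_of_mem_init v hz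
        (right_mem_Icc.2 zero_le_one))
    have h₀ := ih (Fin.init v) y fun z hz => by
      simpa using hM _ (add_smul_mem_parallelepiped_of_mem_init v hz
        (left_mem_Icc.2 zero_le_one))
    calc ‖mixedFwdDiff v f y‖
        ≤ ‖mixedFwdDiff (Fin.init v) f (y + v (Fin.last m))‖
          + ‖mixedFwdDiff (Fin.init v) f y‖ := norm_sub_le _ _
      _ ≤ 2 ^ (m + 1) * M := by rw [pow_succ]; linarith

variable [NormedSpace ℝ F]

theorem hasFDerivAt_mixedFwdDiff {m : ℕ} (v : Fin m → E) {f : E → F}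
    {f' : E → E →L[ℝ] F} {U : Set E} (hf : ∀ z ∈ U, HasFDerivAt f (f' z) z) {y : E}
    (hy : ∀ z ∈ parallelepiped v, y + z ∈ U) :
    HasFDerivAt (mixedFwdDiff v f) (mixedFwdDiff v f' y) y := by
  induction m generalizing y with
  | zero => simpa [mixedFwdDiff] using hf y (by simpa using hy 0 (zero_mem_parallelepiped v))
  | succ m ih =>
    have h₁ := ih (Fin.init v) (y := y + v (Fin.last m)) fun z hz => by
      simpa [add_assoc, add_comm z] using hy _ (add_smul_mem_parallelepiped_of_mem_init v hz
        (right_mem_Icc.2 zero_le_one))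
    have h₀ := ih (Fin.init v) (y := y) fun z hz => by
      simpa using hy _ (add_smul_mem_parallelepiped_of_mem_init v hz
        (left_mem_Icc.2 zero_le_one))
    exact ((hasFDerivAt_comp_add_right _).2 h₁).sub h₀

theorem norm_iteratedFDeriv_sub_le_of_norm_iteratedFDeriv_succ_le {m j : ℕ} (hj : j < m)
    {f : E → F} {x : E} {s A : ℝ} (hf : ContDiffOn ℝ m f (ball x s))
    (hA : ∀ z ∈ ball x s, ‖iteratedFDeriv ℝ (j + 1) f z‖ ≤ A) {z z' : E}
    (hz : z ∈ ball x s) (hz' : z' ∈ ball x s) :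
    ‖iteratedFDeriv ℝ j f z - iteratedFDeriv ℝ j f z'‖ ≤ A * (2 * s) := by
  have hmvt := (convex_ball x s).norm_image_sub_le_of_norm_fderiv_le
    (fun w hw => (hf.contDiffAt (isOpen_ball.mem_nhds hw)).differentiableAt_iteratedFDeriv
      (by exact_mod_cast hj))
    (fun w hw => (norm_fderiv_iteratedFDeriv).trans_le (hA w hw)) hz' hz
  refine hmvt.trans (mul_le_mul_of_nonneg_left ?_ ((norm_nonneg _).trans (hA z hz)))
  rw [← dist_eq_norm]
  linarith [dist_triangle_right z z' x, mem_ball.1 hz, mem_ball.1 hz']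

end MixedFwdDiff

section SameUniverse

-- `E` and `F` share a universe because the induction replaces `F` by `E →L[ℝ] F`.
variable {E F : Type u} [NormedAddCommGroup E] [NormedSpace ℝ E]
  [NormedAddCommGroup F] [NormedSpace ℝ F]

theorem norm_mixedFwdDiff_sub_iteratedFDeriv_le {m : ℕ} {f : E → F} {U : Set E}
    (hU : IsOpen U) (hf : ContDiffOn ℝ m f U) {ω : ℝ}
    (hω : ∀ z ∈ U, ∀ z' ∈ U, ‖iteratedFDeriv ℝ m f z - iteratedFDeriv ℝ m f z'‖ ≤ ω)
    (v : Fin m → E) {y : E} (hy : ∀ z ∈ parallelepiped v, y + z ∈ U) :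
    ‖mixedFwdDiff v f y - iteratedFDeriv ℝ m f y v‖ ≤ m * (∏ i, ‖v i‖) * ω := by
  induction m generalizing F y with
  | zero => simp [mixedFwdDiff]
  | succ n ih =>
    set a := v (Fin.last n)
    set f' := fderiv ℝ f
    set φ := iteratedFDeriv ℝ n f' y (Fin.init v)
    have hf' : ContDiffOn ℝ n f' U := hf.fderiv_of_isOpen hU (by simp)
    have hderiv : ∀ z ∈ U, HasFDerivAt f (f' z) z := fun z hz =>
      ((hf.differentiableOn (by simp) z hz).differentiableAt (hU.mem_nhds hz)).hasFDerivAt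
    have hω' : ∀ z ∈ U, ∀ z' ∈ U,
        ‖iteratedFDeriv ℝ n f' z - iteratedFDeriv ℝ n f' z'‖ ≤ ω := fun z hz z' hz' => by
      rw [norm_iteratedFDeriv_fderiv_sub]; exact hω z hz z' hz'
    have hseg : ∀ z ∈ segment ℝ y (y + a), ∀ w ∈ parallelepiped (Fin.init v), z + w ∈ U := by
      intro z hz w hw
      rw [segment_eq_image'] at hz
      obtain ⟨s, hs, rfl⟩ := hz
      simpa [add_assoc, add_comm w] using
        hy _ (add_smul_mem_parallelepiped_of_mem_init v hw hs)
    have hmemU : ∀ z ∈ segment ℝ y (y + a), z ∈ U := fun z hz => by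
      simpa using hseg z hz 0 (zero_mem_parallelepiped _)
    have hbound : ∀ z ∈ segment ℝ y (y + a),
        ‖mixedFwdDiff (Fin.init v) f' z - φ‖ ≤ (n + 1) * (∏ i, ‖Fin.init v i‖) * ω := by
      intro z hz
      have hosc : ‖iteratedFDeriv ℝ n f' z (Fin.init v) - φ‖ ≤ ω * ∏ i, ‖Fin.init v i‖ := by
        rw [← sub_apply]
        exact ((iteratedFDeriv ℝ n f' z - iteratedFDeriv ℝ n f' y).le_opNorm _).trans
          (mul_le_mul_of_nonneg_right (hω' z (hmemU z hz) y
            (hmemU y (left_mem_segment ℝ y (y + a))))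
            (Finset.prod_nonneg fun i _ => norm_nonneg _))
      calc ‖mixedFwdDiff (Fin.init v) f' z - φ‖
          ≤ ‖mixedFwdDiff (Fin.init v) f' z - iteratedFDeriv ℝ n f' z (Fin.init v)‖
            + ‖iteratedFDeriv ℝ n f' z (Fin.init v) - φ‖ := norm_sub_le_norm_sub_add_norm_sub _ _ _
        _ ≤ n * (∏ i, ‖Fin.init v i‖) * ω + ω * ∏ i, ‖Fin.init v i‖ :=
          add_le_add (ih hf' hω' (Fin.init v) (hseg z hz)) hosc
        _ = (n + 1) * (∏ i, ‖Fin.init v i‖) * ω := by ring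
    have hmvt := (convex_segment y (y + a)).norm_image_sub_le_of_norm_hasFDerivWithin_le'
      (fun z hz => (hasFDerivAt_mixedFwdDiff (Fin.init v) hderiv
        (hseg z hz)).hasFDerivWithinAt) hbound
      (left_mem_segment ℝ y (y + a)) (right_mem_segment ℝ y (y + a))
    rw [add_sub_cancel_left, ← iteratedFDeriv_succ_apply_right] at hmvt
    calc ‖mixedFwdDiff v f y - iteratedFDeriv ℝ (n + 1) f y v‖
        ≤ (n + 1) * (∏ i, ‖Fin.init v i‖) * ω * ‖a‖ := hmvt
      _ = ((n + 1 : ℕ) : ℝ) * (∏ i, ‖v i‖) * ω := by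
        rw [Fin.prod_univ_castSucc]; push_cast; simp only [Fin.init, a]; ring

theorem norm_smul_iteratedFDeriv_apply_le {j : ℕ} {f : E → F} {U : Set E} (hU : IsOpen U)
    (hf : ContDiffOn ℝ j f U) {M ω : ℝ} (hM : ∀ z ∈ U, ‖f z‖ ≤ M)
    (hω : ∀ z ∈ U, ∀ z' ∈ U, ‖iteratedFDeriv ℝ j f z - iteratedFDeriv ℝ j f z'‖ ≤ ω)
    {h : ℝ} (hh : 0 ≤ h) {y : E} (hy : closedBall y (j * h) ⊆ U) {u : Fin j → E}
    (hu : ∀ i, ‖u i‖ ≤ 1) :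
    ‖(h ^ j • iteratedFDeriv ℝ j f y) u‖ ≤ 2 ^ j * M + j * h ^ j * ω := by
  set v : Fin j → E := fun i => h • u i
  have hv : ∀ i, ‖v i‖ ≤ h := fun i => by
    simpa [v, norm_smul, abs_of_nonneg hh] using mul_le_of_le_one_right hh (hu i)
  have hbox : ∀ z ∈ parallelepiped v, y + z ∈ U := fun z hz => hy <| by
    rw [mem_closedBall, dist_eq_norm, add_sub_cancel_left]
    refine (norm_le_of_mem_parallelepiped hz).trans ?_
    simpa using Finset.sum_le_sum fun i (_ : i ∈ Finset.univ) => hv i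
  have hyU : y ∈ U := hy (mem_closedBall_self (by positivity))
  have hω0 : 0 ≤ ω := (norm_nonneg _).trans (hω y hyU y hyU)
  have hscale : iteratedFDeriv ℝ j f y v = (h ^ j • iteratedFDeriv ℝ j f y) u := by
    simp [v, ContinuousMultilinearMap.map_smul_univ]
  have hprod : ∏ i, ‖v i‖ ≤ h ^ j := by
    simpa using
      Finset.prod_le_prod (s := Finset.univ) (fun i _ => norm_nonneg (v i)) fun i _ => hv i
  calc ‖(h ^ j • iteratedFDeriv ℝ j f y) u‖
      ≤ ‖mixedFwdDiff v f y‖ + ‖mixedFwdDiff v f y - iteratedFDeriv ℝ j f y v‖ := by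
        rw [← hscale, norm_sub_rev]; exact norm_le_norm_add_norm_sub' _ _
    _ ≤ 2 ^ j * M + j * h ^ j * ω := by
      gcongr
      · exact norm_mixedFwdDiff_le v f y fun z hz => hM _ (hbox z hz)
      · exact (norm_mixedFwdDiff_sub_iteratedFDeriv_le hU hf hω v hbox).trans (by gcongr)

end SameUniverse

theorem ContinuousMultilinearMap.norm_le_card_pow_mul {ι κ G : Type*} [Fintype ι]
    [DecidableEq ι] [Fintype κ] [SeminormedAddCommGroup G] [NormedSpace ℝ G]
    (T : ContinuousMultilinearMap ℝ (fun _ : κ => ι → ℝ) G) {M : ℝ} (hM : 0 ≤ M)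
    (hT : ∀ t : κ → ι, ‖T fun k => Pi.single (t k) 1‖ ≤ M) :
    ‖T‖ ≤ (Fintype.card ι : ℝ) ^ Fintype.card κ * M := by
  classical
  refine T.opNorm_le_bound (by positivity) fun u => ?_
  have hu : u = fun k => ∑ i, u k i • (Pi.single i 1 : ι → ℝ) := by
    ext k i; simp [Pi.single_apply]
  conv_lhs => rw [hu, T.map_sum]
  calc ‖∑ t : κ → ι, T fun k => u k (t k) • (Pi.single (t k) 1 : ι → ℝ)‖
      ≤ ∑ t : κ → ι, ‖T fun k => u k (t k) • (Pi.single (t k) 1 : ι → ℝ)‖ := norm_sum_le _ _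
    _ ≤ ∑ _t : κ → ι, M * ∏ k, ‖u k‖ := Finset.sum_le_sum fun t _ => by
      rw [T.map_smul_univ, norm_smul, norm_prod, mul_comm]
      exact mul_le_mul (hT t) (Finset.prod_le_prod (fun _ _ => norm_nonneg _)
        fun k _ => norm_le_pi_norm (u k) (t k)) (by positivity) hM
    _ = (Fintype.card ι : ℝ) ^ Fintype.card κ * M * ∏ k, ‖u k‖ := by
      simp [mul_assoc]

section EuclideanNorm

variable {ι : Type*} [Fintype ι]

theorem eunorm_eq_norm_toLp (z : ι → ℝ) : eunorm z = ‖WithLp.toLp 2 z‖ := by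
  rw [EuclideanSpace.norm_eq]; rfl

theorem eunorm_add_le (z z' : ι → ℝ) : eunorm (z + z') ≤ eunorm z + eunorm z' := by
  simpa only [eunorm_eq_norm_toLp, WithLp.toLp_add] using norm_add_le _ _

theorem eunorm_le_card_mul_norm (z : ι → ℝ) : eunorm z ≤ Fintype.card ι * ‖z‖ :=
  calc eunorm z ≤ √((∑ i, ‖z i‖) ^ 2) :=
        Real.sqrt_le_sqrt (Finset.sum_sq_le_sq_sum_of_nonneg fun i _ => norm_nonneg _)
    _ = ∑ i, ‖z i‖ := Real.sqrt_sq (by positivity)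
    _ ≤ Fintype.card ι * ‖z‖ := by
      simpa using Finset.sum_le_sum fun i (_ : i ∈ Finset.univ) => norm_le_pi_norm z i

theorem eunorm_lt_of_norm_lt {z : ι → ℝ} {s r : ℝ} (hz : ‖z‖ < s)
    (hsr : (Fintype.card ι + 1) * s ≤ r) : eunorm z < r :=
  calc eunorm z ≤ (Fintype.card ι + 1) * ‖z‖ :=
        (eunorm_le_card_mul_norm z).trans (by gcongr; linarith)
    _ < (Fintype.card ι + 1) * s := by gcongr
    _ ≤ r := hsr

theorem eunorm_sub_lt_of_mem_ball {x z z' : ι → ℝ} {s r : ℝ} (hz : z ∈ ball x s)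
    (hz' : z' ∈ ball x s) (hsr : (Fintype.card ι + 1) * s ≤ r) : eunorm (z - z') < 2 * r := by
  refine eunorm_lt_of_norm_lt (s := 2 * s) ?_ (by linarith)
  rw [← dist_eq_norm]
  linarith [dist_triangle_right z z' x, mem_ball.1 hz, mem_ball.1 hz']

end EuclideanNorm

section Interpolation

variable {ι F : Type u} [Fintype ι] [NormedAddCommGroup F] [NormedSpace ℝ F]

theorem pow_mul_norm_iteratedFDeriv_le_of_oscillation {j : ℕ} {f : (ι → ℝ) → F}
    {x : ι → ℝ} {s M ω : ℝ} (hs : 0 < s) (hf : ContDiffOn ℝ j f (ball x s))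
    (hM : ∀ z ∈ ball x s, ‖f z‖ ≤ M)
    (hω : ∀ z ∈ ball x s, ∀ z' ∈ ball x s,
      ‖iteratedFDeriv ℝ j f z - iteratedFDeriv ℝ j f z'‖ ≤ ω) :
    s ^ j * ‖iteratedFDeriv ℝ j f x‖
      ≤ (Fintype.card ι : ℝ) ^ j * ((2 * (j + 1)) ^ j * M + j * s ^ j * ω) := by
  classical
  set h := s / (j + 1)
  have hh : 0 < h := by positivity
  have hs_eq : s = (j + 1) * h := by simp only [h]; field_simp
  have hball : closedBall x (j * h) ⊆ ball x s :=
    closedBall_subset_ball (by rw [hs_eq]; linarith)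
  have hM0 : 0 ≤ M := (norm_nonneg _).trans (hM x (mem_ball_self hs))
  have hω0 : 0 ≤ ω := (norm_nonneg _).trans (hω x (mem_ball_self hs) x (mem_ball_self hs))
  have hT := (h ^ j • iteratedFDeriv ℝ j f x).norm_le_card_pow_mul (by positivity) fun t =>
    norm_smul_iteratedFDeriv_apply_le isOpen_ball hf hM hω hh.le hball fun i => by
      simp [Pi.norm_single]
  rw [Fintype.card_fin, norm_smul, norm_pow, Real.norm_of_nonneg hh.le] at hT
  calc s ^ j * ‖iteratedFDeriv ℝ j f x‖
      = (j + 1) ^ j * (h ^ j * ‖iteratedFDeriv ℝ j f x‖) := by rw [hs_eq, mul_pow, mul_assoc]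
    _ ≤ (j + 1) ^ j * ((Fintype.card ι : ℝ) ^ j * (2 ^ j * M + j * h ^ j * ω)) := by gcongr
    _ = _ := by rw [hs_eq]; simp only [mul_pow]; ring

variable (ι F) in
def LocalInterpolationBound (k j : ℕ) (C : ℝ) : Prop :=
  ∀ (f : (ι → ℝ) → F) (x : ι → ℝ) (r M ω : ℝ), 0 < r → ContDiffOn ℝ k f (ball x r) →
    (∀ z ∈ ball x r, ‖f z‖ ≤ M) →
    (∀ z ∈ ball x r, ∀ z' ∈ ball x r,
      ‖iteratedFDeriv ℝ k f z - iteratedFDeriv ℝ k f z'‖ ≤ ω) →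
    r ^ j * ‖iteratedFDeriv ℝ j f x‖ ≤ C * (r ^ k * ω + M)

theorem LocalInterpolationBound.mono {k j : ℕ} {C C' : ℝ}
    (hC : LocalInterpolationBound ι F k j C) (hCC' : C ≤ C') :
    LocalInterpolationBound ι F k j C' := by
  intro f x r M ω hr hf hM hω
  have hM0 : 0 ≤ M := (norm_nonneg _).trans (hM x (mem_ball_self hr))
  have hω0 : 0 ≤ ω := (norm_nonneg _).trans (hω x (mem_ball_self hr) x (mem_ball_self hr))
  exact (hC f x r M ω hr hf hM hω).trans (by gcongr)

theorem localInterpolationBound_self (k : ℕ) :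
    LocalInterpolationBound ι F k k ((Fintype.card ι : ℝ) ^ k * ((2 * (k + 1)) ^ k + k)) := by
  intro f x r M ω hr hf hM hω
  have hM0 : 0 ≤ M := (norm_nonneg _).trans (hM x (mem_ball_self hr))
  have hω0 : 0 ≤ ω := (norm_nonneg _).trans (hω x (mem_ball_self hr) x (mem_ball_self hr))
  refine (pow_mul_norm_iteratedFDeriv_le_of_oscillation hr hf hM hω).trans ?_
  rw [mul_assoc _ _ (r ^ k * ω + M)]
  refine mul_le_mul_of_nonneg_left ?_ (by positivity)
  nlinarith [mul_nonneg (pow_nonneg (by positivity : (0 : ℝ) ≤ 2 * (k + 1)) k)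
    (mul_nonneg (pow_nonneg hr.le k) hω0), mul_nonneg (Nat.cast_nonneg k : (0 : ℝ) ≤ k) hM0]

theorem LocalInterpolationBound.of_succ {k j : ℕ} (hj : j < k) {C : ℝ} (hC0 : 0 ≤ C)
    (hC : LocalInterpolationBound ι F k (j + 1) C) :
    LocalInterpolationBound ι F k j
      ((2 * Fintype.card ι : ℝ) ^ j * ((2 * (j + 1)) ^ j + 2 * j * C)) := by
  intro f x r M ω hr hf hM hω
  obtain ⟨s, rfl⟩ : ∃ s, r = 2 * s := ⟨r / 2, by ring⟩
  have hs : 0 < s := by linarith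
  have hM0 : 0 ≤ M := (norm_nonneg _).trans (hM x (mem_ball_self hr))
  have hω0 : 0 ≤ ω := (norm_nonneg _).trans (hω x (mem_ball_self hr) x (mem_ball_self hr))
  set X := (2 * s) ^ k * ω + M with hX_def
  have hX : s ^ k * ω + M ≤ X := by rw [hX_def]; gcongr; linarith
  have hsr : ball x s ⊆ ball x (2 * s) := ball_subset_ball (by linarith)
  have hA : ∀ z ∈ ball x s, ‖iteratedFDeriv ℝ (j + 1) f z‖ ≤ C * X / s ^ (j + 1) := by
    intro z hz
    have hzs : ball z s ⊆ ball x (2 * s) := ball_subset_ball' (by linarith [mem_ball.1 hz])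
    rw [le_div_iff₀ (by positivity), mul_comm]
    exact (hC f z s M ω hs (hf.mono hzs) (fun w hw => hM w (hzs hw))
      (fun w hw w' hw' => hω w (hzs hw) w' (hzs hw'))).trans (by gcongr)
  have hcore := pow_mul_norm_iteratedFDeriv_le_of_oscillation hs
    ((hf.mono hsr).of_le (by exact_mod_cast hj.le)) (fun z hz => hM z (hsr hz))
    fun z hz z' hz' => norm_iteratedFDeriv_sub_le_of_norm_iteratedFDeriv_succ_le hj
      (hf.mono hsr) hA hz hz'
  have hcancel : s ^ j * (C * X / s ^ (j + 1) * (2 * s)) = 2 * C * X := by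
    field_simp; ring
  rw [mul_assoc (j : ℝ), hcancel] at hcore
  have hMX : (2 * (j + 1) : ℝ) ^ j * M + j * (2 * C * X) ≤ ((2 * (j + 1)) ^ j + 2 * j * C) * X := by
    nlinarith [pow_nonneg (by positivity : (0 : ℝ) ≤ 2 * (j + 1)) j,
      mul_nonneg (pow_nonneg hr.le k) hω0]
  calc (2 * s) ^ j * ‖iteratedFDeriv ℝ j f x‖
      = 2 ^ j * (s ^ j * ‖iteratedFDeriv ℝ j f x‖) := by ring
    _ ≤ 2 ^ j * ((Fintype.card ι : ℝ) ^ j * ((2 * (j + 1)) ^ j + 2 * j * C) * X) := by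
      rw [mul_assoc _ _ X]
      exact mul_le_mul_of_nonneg_left
        (hcore.trans (mul_le_mul_of_nonneg_left hMX (by positivity))) (by positivity)
    _ = _ := by ring

theorem exists_localInterpolationBound (k : ℕ) :
    ∃ C > 0, ∀ j ≤ k, LocalInterpolationBound ι F k j C := by
  suffices h : ∀ j ≤ k, ∃ C > 0, ∀ i, j ≤ i → i ≤ k → LocalInterpolationBound ι F k i C by
    obtain ⟨C, hC0, hC⟩ := h 0 (Nat.zero_le k)
    exact ⟨C, hC0, fun j hj => hC j (Nat.zero_le j) hj⟩
  intro j hj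
  induction hj using Nat.decreasingInduction with
  | self =>
    refine ⟨max 1 ((Fintype.card ι : ℝ) ^ k * ((2 * (k + 1)) ^ k + k)),
      lt_max_of_lt_left one_pos, fun i hi hik => ?_⟩
    obtain rfl : i = k := le_antisymm hik hi
    exact (localInterpolationBound_self i).mono (le_max_right _ _)
  | of_succ j hjk ih =>
    obtain ⟨C, hC0, hC⟩ := ih
    refine ⟨max C ((2 * Fintype.card ι : ℝ) ^ j * ((2 * (j + 1)) ^ j + 2 * j * C)),
      lt_max_of_lt_left hC0, fun i hi hik => ?_⟩
    obtain rfl | hi := hi.eq_or_lt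
    · exact ((hC (j + 1) le_rfl hjk).of_succ hjk hC0.le).mono (le_max_right _ _)
    · exact (hC i hi hik).mono (le_max_left _ _)

theorem LocalInterpolationBound.pow_mul_norm_le_of_holder {k j : ℕ} {C : ℝ}
    (hC : LocalInterpolationBound ι F k j C) (hC0 : 0 ≤ C) (hjk : j ≤ k) {α : ℝ} (hα : 0 ≤ α)
    {f : (ι → ℝ) → F} {x : ι → ℝ} {s r M₁ M₂ : ℝ} (hs : 0 < s)
    (hsr : (Fintype.card ι + 1) * s = r) (hf : ContDiffOn ℝ k f (ball x s))
    (hM₂ : ∀ z ∈ ball x s, ‖f z‖ ≤ M₂) (hM₁ : 0 ≤ M₁)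
    (hH : ∀ z ∈ ball x s, ∀ z' ∈ ball x s,
      ‖iteratedFDeriv ℝ k f z - iteratedFDeriv ℝ k f z'‖ ≤ M₁ * eunorm (z - z') ^ α) :
    r ^ j * ‖iteratedFDeriv ℝ j f x‖
      ≤ ((Fintype.card ι : ℝ) + 1) ^ k * 2 ^ α * C * (r ^ ((k : ℝ) + α) * M₁ + M₂) := by
  set n : ℝ := (Fintype.card ι : ℝ)
  have hn : 1 ≤ n + 1 := le_add_of_nonneg_left (Nat.cast_nonneg _)
  have hlocal := hC f x s M₂ (M₁ * (2 * r) ^ α) hs hf hM₂ fun z hz z' hz' =>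
    (hH z hz z' hz').trans <| by
      gcongr
      exacts [Real.sqrt_nonneg _, (eunorm_sub_lt_of_mem_ball hz hz' hsr.le).le]
  subst hsr
  rw [Real.mul_rpow zero_le_two (by positivity)] at hlocal
  rw [Real.rpow_add (by positivity), Real.rpow_natCast, mul_pow, mul_pow]
  set t := ((n + 1) * s) ^ α
  calc (n + 1) ^ j * s ^ j * ‖iteratedFDeriv ℝ j f x‖
      = (n + 1) ^ j * (s ^ j * ‖iteratedFDeriv ℝ j f x‖) := by ring
    _ ≤ (n + 1) ^ k * (C * (2 ^ α * (1 * s ^ k * t * M₁) + 1 * M₂)) :=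
      mul_le_mul (pow_le_pow_right₀ hn hjk) (hlocal.trans_eq (by ring))
        (by positivity) (by positivity)
    _ ≤ (n + 1) ^ k * (C * (2 ^ α * ((n + 1) ^ k * s ^ k * t * M₁) + 2 ^ α * M₂)) := by
      have hM₂0 : 0 ≤ M₂ := (norm_nonneg _).trans (hM₂ x (mem_ball_self hs))
      gcongr
      · exact one_le_pow₀ hn
      · exact Real.one_le_rpow one_le_two hα
    _ = (n + 1) ^ k * 2 ^ α * C * ((n + 1) ^ k * s ^ k * t * M₁ + M₂) := by ring

end Interpolation

theorem Bq_mono {d e : ℕ} {p : Fin d ⊕ Fin e → ℝ} {r r' : ℝ} (h : r ≤ r') :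
    Bq d e p r ⊆ Bq d e p r' :=
  fun _ ⟨v, hv⟩ => ⟨v, hv.trans_le h⟩

theorem ball_subset_Bq {d e : ℕ} {p x : Fin d ⊕ Fin e → ℝ} {ρ R s : ℝ}
    (hx : x ∈ Bq d e p ρ) (hs : (Fintype.card (Fin d ⊕ Fin e) + 1) * s ≤ R - ρ) :
    ball x s ⊆ Bq d e p R := by
  obtain ⟨v, hv⟩ := hx
  refine fun z hz => ⟨v, ?_⟩
  have hzx := eunorm_lt_of_norm_lt (by rwa [mem_ball, dist_eq_norm] at hz) hs
  calc eunorm (z - p - latv d e v) = eunorm ((z - x) + (x - p - latv d e v)) := by abel_nf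
    _ ≤ eunorm (z - x) + eunorm (x - p - latv d e v) := eunorm_add_le _ _
    _ < R := by linarith

theorem interpolation_cylinder_general
    (d e N k : ℕ)
    (α : ℝ) (hα0 : 0 < α) :
    ∃ C : ℝ, 0 < C ∧
      ∀ (p : (Fin d ⊕ Fin e) → ℝ) (ρ R : ℝ), 0 < ρ → ρ < R →
      ∀ σ : ((Fin d ⊕ Fin e) → ℝ) → (Fin N → ℝ),
        (∀ v : Fin e → ℤ, ∀ x ∈ Bq d e p (2 * R), σ (x + latv d e v) = σ x) →
        ContDiffOn ℝ (k : ℕ) σ (Bq d e p (2 * R)) →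
        (∀ x ∈ Bq d e p (2 * R), ∃ ε > 0, ∃ L : ℝ,
          ∀ y ∈ Bq d e p (2 * R), ∀ y' ∈ Bq d e p (2 * R),
            eunorm (y - x) < ε → eunorm (y' - x) < ε →
            ‖iteratedFDeriv ℝ k σ y - iteratedFDeriv ℝ k σ y'‖
              ≤ L * eunorm (y - y') ^ α) →
        ∀ M₁ M₂ : ℝ, 0 ≤ M₁ → 0 ≤ M₂ →
        (∀ x ∈ Bq d e p R, ∀ x' ∈ Bq d e p R,
          ‖iteratedFDeriv ℝ k σ x - iteratedFDeriv ℝ k σ x'‖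
            ≤ M₁ * eunorm (x - x') ^ α) →
        (∀ x ∈ Bq d e p R, ‖σ x‖ ≤ M₂) →
        ∀ j, 1 ≤ j → j ≤ k → ∀ x ∈ Bq d e p ρ,
          (R - ρ) ^ j * ‖iteratedFDeriv ℝ j σ x‖
            ≤ C * ((R - ρ) ^ ((k : ℝ) + α) * M₁ + M₂) := by
  obtain ⟨C, hC0, hC⟩ := exists_localInterpolationBound (ι := Fin d ⊕ Fin e) (F := Fin N → ℝ) k
  refine ⟨((Fintype.card (Fin d ⊕ Fin e) : ℝ) + 1) ^ k * 2 ^ α * C, by positivity, ?_⟩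
  intro p ρ R hρ hρR σ _ hσ _ M₁ M₂ hM₁ _ hH hS j _ hjk x hx
  set s := (R - ρ) / ((Fintype.card (Fin d ⊕ Fin e) : ℝ) + 1)
  have hsr : ((Fintype.card (Fin d ⊕ Fin e) : ℝ) + 1) * s = R - ρ := by
    simp only [s]; field_simp
  have hball : ball x s ⊆ Bq d e p R := ball_subset_Bq hx hsr.le
  exact (hC j hjk).pow_mul_norm_le_of_holder hC0.le hjk hα0.le
    (div_pos (sub_pos.2 hρR) (by positivity)) hsr
    (hσ.mono (hball.trans (Bq_mono (by linarith)))) (fun z hz => hS z (hball hz)) hM₁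
    fun z hz z' hz' => hH z (hball hz) z' (hball hz')

/-- **Interpolation inequality on balls of arbitrary radius of the flat cylinder
`ℝ^d × T^e`** (the flat-torus case of Lemma 3.5 of Hein–Tosatti): for `ℤ^e`-periodic
`σ ∈ C^{k,α}_loc(B_q(p,2R))`,
`Σ_{j=1}^k (R-ρ)^j sup_{B_q(p,ρ)} ‖D^j σ‖ ≤ C_k ((R-ρ)^{k+α} [D^k σ]_{C^α(B_q(p,R))}
+ sup_{B_q(p,R)} ‖σ‖)` with `C_k` independent of the center and the radii. -/
theorem interpolation_cylinder
    (d e N k : ℕ) (he : 1 ≤ e) (hN : 1 ≤ N) (hk : 1 ≤ k)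
    (α : ℝ) (hα0 : 0 < α) (hα1 : α < 1) :
    ∃ C : ℝ, 0 < C ∧
      ∀ (p : (Fin d ⊕ Fin e) → ℝ) (ρ R : ℝ), 0 < ρ → ρ < R →
      ∀ σ : ((Fin d ⊕ Fin e) → ℝ) → (Fin N → ℝ),
        (∀ v : Fin e → ℤ, ∀ x ∈ Bq d e p (2 * R), σ (x + latv d e v) = σ x) →
        ContDiffOn ℝ (k : ℕ) σ (Bq d e p (2 * R)) →
        (∀ x ∈ Bq d e p (2 * R), ∃ ε > 0, ∃ L : ℝ,
          ∀ y ∈ Bq d e p (2 * R), ∀ y' ∈ Bq d e p (2 * R),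
            eunorm (y - x) < ε → eunorm (y' - x) < ε →
            ‖iteratedFDeriv ℝ k σ y - iteratedFDeriv ℝ k σ y'‖
              ≤ L * eunorm (y - y') ^ α) →
        ∀ M₁ M₂ : ℝ, 0 ≤ M₁ → 0 ≤ M₂ →
        (∀ x ∈ Bq d e p R, ∀ x' ∈ Bq d e p R,
          ‖iteratedFDeriv ℝ k σ x - iteratedFDeriv ℝ k σ x'‖
            ≤ M₁ * eunorm (x - x') ^ α) →
        (∀ x ∈ Bq d e p R, ‖σ x‖ ≤ M₂) →
        ∀ j, 1 ≤ j → j ≤ k → ∀ x ∈ Bq d e p ρ,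
          (R - ρ) ^ j * ‖iteratedFDeriv ℝ j σ x‖
            ≤ C * ((R - ρ) ^ ((k : ℝ) + α) * M₁ + M₂) :=
  interpolation_cylinder_general d e N k α hα0
end
end
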